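/- For every x ≥ 0, e^{x²}·(1 + erf(x)) = ∑_{k=1}^∞ x^{k-1} / Γ((k+1)/2), where erf denotes the Gauss error function and Γ the Gamma function. -/

import Mathlib

/-!
The series `E(x) = ∑ xⁿ / Γ(n/2 + 1)` is the Mittag-Leffler function `E_{1/2}`. Differentiating
term by term and using `(n + 2) / Γ(n/2 + 2) = 2 / Γ(n/2 + 1)` gives `E' = 2/√π + 2xE`, which is
also the linear ODE solved by `e^{x²}(1 + erf x)`. Hence `e^{-x²} E - erf` has derivative zero,
and its value at `0` is `1`.
-/

open MeasureTheory Real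

/-- The Gauss error function. -/
noncomputable def erf (x : ℝ) : ℝ :=
  (2 / Real.sqrt π) * ∫ t in (0:ℝ)..x, Real.exp (-t ^ 2)

open scoped Nat

lemma factorial_mul_Gamma_le_Gamma_nat_add {s : ℝ} (hs : 1 ≤ s) (k : ℕ) :
    k ! * Gamma s ≤ Gamma (k + s) := by
  induction k with
  | zero => simp
  | succ k ih =>
    have hks : 0 < (k : ℝ) + s := by positivity
    have hΓ : 0 ≤ (k ! : ℝ) * Gamma s := by
      have := Gamma_pos_of_pos (show 0 < s by linarith); positivity
    calc ((k + 1)! : ℝ) * Gamma s = (k + 1) * (k ! * Gamma s) := by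
          push_cast [Nat.factorial_succ]; ring
      _ ≤ (k + s) * Gamma (k + s) := by gcongr
      _ = Gamma ((k + 1 : ℕ) + s) := by
          rw [Nat.cast_succ, add_right_comm, Gamma_add_one hks.ne']

lemma summable_pow_div_Gamma_nat_add (y : ℝ) {s : ℝ} (hs : 1 ≤ s) :
    Summable fun k : ℕ => y ^ k / Gamma (k + s) := by
  have hΓs : 0 < Gamma s := Gamma_pos_of_pos (by linarith)
  refine .of_norm_bounded ((summable_pow_div_factorial |y|).div_const (Gamma s)) fun k => ?_
  have hk : 0 < (k ! : ℝ) * Gamma s := by positivity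
  rw [norm_div, norm_pow, norm_eq_abs, norm_of_nonneg (hk.trans_le
    (factorial_mul_Gamma_le_Gamma_nat_add hs k)).le, div_div]
  gcongr
  exact factorial_mul_Gamma_le_Gamma_nat_add hs k

lemma summable_pow_div_Gamma_half_add_one (x : ℝ) :
    Summable fun n : ℕ => x ^ n / Gamma ((n + 2) / 2) := by
  apply Summable.even_add_odd
  · refine (summable_pow_div_Gamma_nat_add (x ^ 2) le_rfl).congr fun k => ?_
    have hk : (((2 * k : ℕ) : ℝ) + 2) / 2 = k + 1 := by push_cast; ring
    rw [hk, pow_mul]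
  · refine ((summable_pow_div_Gamma_nat_add (x ^ 2) (s := 3 / 2) (by norm_num)).mul_left x).congr
      fun k => ?_
    have hk : (((2 * k + 1 : ℕ) : ℝ) + 2) / 2 = k + 3 / 2 := by push_cast; ring
    rw [hk, pow_succ x (2 * k), pow_mul]
    ring

noncomputable def mittagLefflerHalf (x : ℝ) : ℝ :=
  ∑' n : ℕ, x ^ n / Gamma ((n + 2) / 2)

lemma mittagLefflerHalf_zero : mittagLefflerHalf 0 = 1 := by
  rw [mittagLefflerHalf, tsum_eq_single 0 fun n hn => by rw [zero_pow hn, zero_div]]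
  norm_num

lemma norm_nat_mul_pow_sub_one_div_Gamma_le {y R : ℝ} (hR : 1 ≤ R) (hy : |y| ≤ R) (n : ℕ) :
    ‖n * y ^ (n - 1) / Gamma ((n + 2) / 2)‖ ≤ (2 * R) ^ n / Gamma ((n + 2) / 2) := by
  have hΓ : 0 < Gamma ((n + 2) / 2) := Gamma_pos_of_pos (by positivity)
  rw [norm_div, norm_mul, norm_pow, Real.norm_natCast, norm_eq_abs, norm_of_nonneg hΓ.le]
  gcongr
  calc (n : ℝ) * |y| ^ (n - 1) ≤ 2 ^ n * R ^ n := by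
        gcongr
        · exact_mod_cast n.lt_two_pow_self.le
        · exact (pow_le_pow_left₀ (abs_nonneg y) hy _).trans (pow_le_pow_right₀ hR (n.sub_le 1))
    _ = (2 * R) ^ n := (mul_pow 2 R n).symm

lemma summable_nat_mul_pow_sub_one_div_Gamma (y : ℝ) :
    Summable fun n : ℕ => n * y ^ (n - 1) / Gamma ((n + 2) / 2) :=
  .of_norm_bounded (summable_pow_div_Gamma_half_add_one (2 * (|y| + 1)))
    (norm_nat_mul_pow_sub_one_div_Gamma_le (by linarith [abs_nonneg y]) (by linarith))

lemma nat_add_two_div_Gamma (n : ℕ) :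
    ((n : ℝ) + 2) / Gamma ((n + 2 + 2) / 2) = 2 / Gamma ((n + 2) / 2) := by
  have hn : ((n : ℝ) + 2) / 2 ≠ 0 := by positivity
  rw [show ((n : ℝ) + 2 + 2) / 2 = (n + 2) / 2 + 1 by ring, Gamma_add_one hn]
  field_simp

lemma tsum_nat_mul_pow_sub_one_div_Gamma (y : ℝ) :
    ∑' n : ℕ, n * y ^ (n - 1) / Gamma ((n + 2) / 2) = 2 / √π + 2 * y * mittagLefflerHalf y := by
  rw [← (summable_nat_mul_pow_sub_one_div_Gamma y).sum_add_tsum_nat_add 2, mittagLefflerHalf,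
    ← tsum_mul_left]
  congr 1
  · have hΓ : Gamma (3 / 2) = √π / 2 := by
      rw [show (3 / 2 : ℝ) = 1 / 2 + 1 by norm_num, Gamma_add_one (by norm_num), Gamma_one_half_eq]
      ring
    norm_num [Finset.sum_range_succ, hΓ]
  · refine tsum_congr fun n => ?_
    push_cast
    rw [mul_div_right_comm, nat_add_two_div_Gamma, pow_succ]
    ring

lemma hasDerivAt_mittagLefflerHalf (y : ℝ) :
    HasDerivAt mittagLefflerHalf (2 / √π + 2 * y * mittagLefflerHalf y) y := by
  set R := |y| + 1
  have hR : 1 ≤ R := by linarith [abs_nonneg y]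
  rw [← tsum_nat_mul_pow_sub_one_div_Gamma]
  refine hasDerivAt_tsum_of_isPreconnected
    (g := fun (n : ℕ) (z : ℝ) => z ^ n / Gamma ((n + 2) / 2))
    (g' := fun (n : ℕ) (z : ℝ) => n * z ^ (n - 1) / Gamma ((n + 2) / 2))
    (summable_pow_div_Gamma_half_add_one (2 * R))
    Metric.isOpen_ball (convex_ball 0 R).isPreconnected
    (fun n z _ => (hasDerivAt_pow n z).div_const _)
    (fun n z hz => norm_nat_mul_pow_sub_one_div_Gamma_le hR
      (by simpa using (mem_ball_zero_iff.mp hz).le) n)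
    (Metric.mem_ball_self (by positivity)) (summable_pow_div_Gamma_half_add_one 0) ?_
  rw [mem_ball_zero_iff, norm_eq_abs]
  linarith

lemma hasDerivAt_erf (y : ℝ) : HasDerivAt erf (2 / √π * exp (-y ^ 2)) y := by
  have hc : Continuous fun t : ℝ => exp (-t ^ 2) := by fun_prop
  exact (intervalIntegral.integral_hasDerivAt_right (hc.intervalIntegrable _ _)
    (hc.stronglyMeasurableAtFilter _ _) hc.continuousAt).const_mul _

lemma exp_neg_sq_mul_mittagLefflerHalf_sub_erf (x : ℝ) :
    exp (-x ^ 2) * mittagLefflerHalf x - erf x = 1 := by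
  have hderiv (y : ℝ) :
      HasDerivAt (fun z => exp (-z ^ 2) * mittagLefflerHalf z - erf z) 0 y := by
    have hsq : HasDerivAt (fun z : ℝ => -z ^ 2) (-(2 * y)) y := by
      simpa using (hasDerivAt_pow 2 y).fun_neg
    refine ((hsq.exp.mul (hasDerivAt_mittagLefflerHalf y)).sub (hasDerivAt_erf y)).congr_deriv ?_
    ring
  have hconst := is_const_of_deriv_eq_zero (fun y => (hderiv y).differentiableAt)
    (fun y => (hderiv y).deriv) x 0
  simpa [mittagLefflerHalf_zero, erf] using hconst

theorem stmt_1_general (x : ℝ) :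
    Real.exp (x ^ 2) * (1 + erf x)
      = ∑' k : ℕ, x ^ k / Real.Gamma (((k : ℝ) + 2) / 2) := by
  have h := exp_neg_sq_mul_mittagLefflerHalf_sub_erf x
  have hexp : exp (x ^ 2) * exp (-x ^ 2) = 1 := by rw [← exp_add, add_neg_cancel, exp_zero]
  rw [← mittagLefflerHalf]
  linear_combination (-exp (x ^ 2)) * h + mittagLefflerHalf x * hexp

/-- `e^{x²}(1 + erf x) = ∑_{k=1}^∞ x^{k-1}/Γ((k+1)/2)`. -/
theorem stmt_1 (x : ℝ) (hx : 0 ≤ x) :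
    Real.exp (x ^ 2) * (1 + erf x)
      = ∑' k : ℕ, x ^ k / Real.Gamma (((k : ℝ) + 2) / 2) :=
  stmt_1_general x
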